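/- Let A be an allotment and let L be a loop of A of type (ii): a directed path of transfer edges of Γ(A) on pairwise distinct service centers with pairwise distinct demand units from s_i to s_j, together with the penalty transfer edge from s_j to s_i (of weight p_{s_j}(o_{s_j}(A)+1) − p_{s_i}(o_{s_i}(A))). Let A' be the allotment obtained by removing L from A. Then o_{s_i}(A') = o_{s_i}(A) − 1, o_{s_j}(A') = o_{s_j}(A) + 1, o_s(A') = o_s(A) for all other s, and Cost(A') = Cost(A) + cost(L). In particular, if cost(L) < 0 then A is not optimal. -/

import Mathlib

open Finset

/-- Cyclic successor on `Fin n`. -/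
def cnext {n : ℕ} (t : Fin n) : Fin n := ⟨(t.val + 1) % n, Nat.mod_lt _ t.pos⟩

section LBDD

variable {D S : Type*} [Fintype D] [DecidableEq D] [Fintype S] [DecidableEq S]

/-- Occupancy of a service center `s` under allotment `A`: the number of demand
units assigned to `s`. -/
def occ (A : D → S) (s : S) : ℕ := (Finset.univ.filter fun d => A d = s).card

/-- Total cost of an allotment: assignment costs plus accumulated per-allotment penalties. -/
def cost (CM : D → S → ℤ) (p : S → ℕ → ℤ) (A : D → S) : ℤ :=
  (∑ d, CM d (A d)) + ∑ s, ∑ j ∈ Finset.Icc 1 (occ A s), p s j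

/-- Weight of the penalty transfer edge from `si` to `sj` under allotment `A`. -/
def wpen (p : S → ℕ → ℤ) (A : D → S) (si sj : S) : ℤ :=
  p si (occ A si + 1) - p sj (occ A sj)

/-- A loop: a cyclic sequence of `m` edges; edge `t` is directed from `vtx t` to
`vtx (cnext t)`; if `dem t = some d` it is a transfer edge moving demand unit `d`,
and if `dem t = none` it is a penalty transfer edge. -/
structure Loop (S D : Type*) where
  m : ℕ
  vtx : Fin m → S
  dem : Fin m → Option D

/-- `L` is a loop of allotment `A`: at least two pairwise distinct service centers,
each transfer edge moves a demand unit currently assigned to its tail, the demand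
units are pairwise distinct, and there is at most one penalty transfer edge
(no penalty edge: type (i), a cycle of transfer edges; one penalty edge: type (ii),
a path of transfer edges closed by a penalty transfer edge). -/
def IsLoop (A : D → S) (L : Loop S D) : Prop :=
  2 ≤ L.m ∧ Function.Injective L.vtx ∧
  (∀ t d, L.dem t = some d → A d = L.vtx t) ∧
  (∀ t t' d, L.dem t = some d → L.dem t' = some d → t = t') ∧
  (∀ t t', L.dem t = none → L.dem t' = none → t = t')

/-- Weight of edge `t` of loop `L`. -/
def edgeWt (CM : D → S → ℤ) (p : S → ℕ → ℤ) (A : D → S) (L : Loop S D) (t : Fin L.m) : ℤ :=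
  match L.dem t with
  | some d => CM d (L.vtx (cnext t)) - CM d (L.vtx t)
  | none => wpen p A (L.vtx t) (L.vtx (cnext t))

/-- Cost of a loop: the sum of the weights of its edges. -/
def loopCost (CM : D → S → ℤ) (p : S → ℕ → ℤ) (A : D → S) (L : Loop S D) : ℤ :=
  ∑ t, edgeWt CM p A L t

/-- `A` induces a negative loop. -/
def InducesNegLoop (CM : D → S → ℤ) (p : S → ℕ → ℤ) (A : D → S) : Prop :=
  ∃ L : Loop S D, IsLoop A L ∧ loopCost CM p A L < 0

/-- Removing a loop from `A`: for each transfer edge, reassign its demand unit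
from the tail to the head of the edge. -/
noncomputable def removeLoop (A : D → S) (L : Loop S D) : D → S := fun x =>
  if h : ∃ t, L.dem t = some x then L.vtx (cnext (Classical.choose h)) else A x

end LBDD

/-!
Each demand unit moved along a transfer edge `t` changes `∑ d, f d (A d)` by the transfer
weight of `t`, for every `f : D → S → ℤ`. Taking `f` to be the indicator of a center, the
transfer edges form a path from `s_i = vtx (cnext t0)` to `s_j = vtx t0`, so the indicator
telescopes: `s_i` loses one unit, `s_j` gains one, nothing else changes. The penalty sums
then change only at `s_i` and `s_j`, by exactly the weight of the penalty edge `t0`.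
-/

lemma cnext_eq_finRotate {n : ℕ} (t : Fin n) : cnext t = finRotate n t := by
  cases n with
  | zero => exact t.elim0
  | succ n => ext; simp [cnext, Fin.val_add]

lemma cnext_ne_self {n : ℕ} (hn : 2 ≤ n) (t : Fin n) : cnext t ≠ t := by
  rw [cnext_eq_finRotate, ← Equiv.Perm.mem_support, support_finRotate_of_le hn]
  exact Finset.mem_univ t

lemma sum_comp_cnext {n : ℕ} {M : Type*} [AddCommMonoid M] (f : Fin n → M) :
    ∑ t, f (cnext t) = ∑ t, f t := by
  simp only [cnext_eq_finRotate]
  exact Equiv.sum_comp (finRotate n) f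

lemma natCast_occ {D S : Type*} [Fintype D] [DecidableEq S] (A : D → S) (s : S) :
    (occ A s : ℤ) = ∑ d, if A d = s then 1 else 0 := by
  rw [occ, Finset.card_filter]
  push_cast
  rfl

lemma sum_penalty_of_move {S : Type*} [Fintype S] [DecidableEq S] (p : S → ℕ → ℤ)
    {o o' : S → ℕ} {si sj : S} (hij : si ≠ sj) (hi : o' si + 1 = o si) (hj : o' sj = o sj + 1)
    (hother : ∀ s, s ≠ si → s ≠ sj → o' s = o s) :
    ∑ s, ∑ j ∈ Icc 1 (o' s), p s j =
      (∑ s, ∑ j ∈ Icc 1 (o s), p s j) + p sj (o sj + 1) - p si (o si) := by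
  have hterm : ∀ s, ∑ j ∈ Icc 1 (o' s), p s j = (∑ j ∈ Icc 1 (o s), p s j)
      + (if sj = s then p sj (o sj + 1) else 0) - (if si = s then p si (o si) else 0) := by
    intro s
    by_cases hsi : si = s
    · subst hsi
      rw [← hi, Finset.sum_Icc_succ_top (Nat.le_add_left 1 _), if_neg hij.symm, if_pos rfl]
      ring
    by_cases hsj : sj = s
    · subst hsj
      rw [hj, Finset.sum_Icc_succ_top (Nat.le_add_left 1 _), if_pos rfl, if_neg hsi]
      ring
    rw [hother s (Ne.symm hsi) (Ne.symm hsj), if_neg hsj, if_neg hsi]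
    ring
  simp only [hterm, Finset.sum_sub_distrib, Finset.sum_add_distrib, Finset.sum_ite_eq,
    Finset.mem_univ, if_true]

section RemoveLoop

variable {D S : Type*}

/-- The change of `∑ d, f d (A d)` caused by the transfer edge `t` (zero on a penalty edge). -/
def transferWt (f : D → S → ℤ) (L : Loop S D) (t : Fin L.m) : ℤ :=
  (L.dem t).elim 0 fun d => f d (L.vtx (cnext t)) - f d (L.vtx t)

lemma removeLoop_apply_of_dem [DecidableEq D] {A : D → S} {L : Loop S D}
    (hdinj : ∀ t t' d, L.dem t = some d → L.dem t' = some d → t = t')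
    {t : Fin L.m} {d : D} (h : L.dem t = some d) :
    removeLoop A L d = L.vtx (cnext t) := by
  have he : ∃ t, L.dem t = some d := ⟨t, h⟩
  rw [removeLoop, dif_pos he, hdinj _ _ _ (Classical.choose_spec he) h]

lemma removeLoop_apply_of_not_dem [DecidableEq D] {A : D → S} {L : Loop S D} {d : D}
    (h : ¬ ∃ t, L.dem t = some d) : removeLoop A L d = A d := by
  rw [removeLoop, dif_neg h]

lemma sub_removeLoop_eq_sum [DecidableEq D] {A : D → S} {L : Loop S D}
    (hmem : ∀ t d, L.dem t = some d → A d = L.vtx t)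
    (hdinj : ∀ t t' d, L.dem t = some d → L.dem t' = some d → t = t')
    (f : D → S → ℤ) (d : D) :
    f d (removeLoop A L d) - f d (A d) =
      ∑ t, if L.dem t = some d then f d (L.vtx (cnext t)) - f d (L.vtx t) else 0 := by
  by_cases h : ∃ t, L.dem t = some d
  · obtain ⟨t, ht⟩ := h
    rw [Finset.sum_eq_single t (fun t' _ ht' => if_neg fun h' => ht' (hdinj _ _ _ h' ht))
      (fun ht' => absurd (Finset.mem_univ t) ht'), if_pos ht,
      removeLoop_apply_of_dem hdinj ht, hmem t d ht]
  · rw [removeLoop_apply_of_not_dem h, sub_self]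
    push Not at h
    simp [h]

lemma sum_sub_removeLoop_eq_sum_transferWt [Fintype D] [DecidableEq D] {A : D → S}
    {L : Loop S D} (hmem : ∀ t d, L.dem t = some d → A d = L.vtx t)
    (hdinj : ∀ t t' d, L.dem t = some d → L.dem t' = some d → t = t')
    (f : D → S → ℤ) :
    ∑ d, (f d (removeLoop A L d) - f d (A d)) = ∑ t, transferWt f L t := by
  simp_rw [sub_removeLoop_eq_sum hmem hdinj f]
  rw [Finset.sum_comm]
  refine Finset.sum_congr rfl fun t _ => ?_
  rcases h : L.dem t with _ | d <;> simp [transferWt, h]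

lemma sum_transferWt_const {L : Loop S D} {t0 : Fin L.m} (hpen : ∀ t, L.dem t = none → t = t0)
    (ht0 : L.dem t0 = none) (g : S → ℤ) :
    ∑ t, transferWt (fun _ => g) L t = g (L.vtx t0) - g (L.vtx (cnext t0)) := by
  have hterm : ∀ t, transferWt (fun _ => g) L t = (g (L.vtx (cnext t)) - g (L.vtx t)) -
      if t0 = t then g (L.vtx (cnext t0)) - g (L.vtx t0) else 0 := by
    intro t
    rcases ht : L.dem t with _ | d
    · obtain rfl := hpen t ht
      simp [transferWt, ht]
    · have hne : t0 ≠ t := by rintro rfl; simp [ht0] at ht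
      simp [transferWt, ht, hne]
  simp only [hterm, Finset.sum_sub_distrib, Finset.sum_ite_eq, Finset.mem_univ, if_true,
    sum_comp_cnext (fun t => g (L.vtx t)), sub_self, zero_sub, neg_sub]

lemma natCast_occ_removeLoop [Fintype D] [DecidableEq D] [DecidableEq S] {A : D → S}
    {L : Loop S D} (hmem : ∀ t d, L.dem t = some d → A d = L.vtx t)
    (hdinj : ∀ t t' d, L.dem t = some d → L.dem t' = some d → t = t')
    {t0 : Fin L.m} (hpen : ∀ t, L.dem t = none → t = t0) (ht0 : L.dem t0 = none) (s : S) :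
    (occ (removeLoop A L) s : ℤ) = occ A s
      + (if L.vtx t0 = s then 1 else 0) - (if L.vtx (cnext t0) = s then 1 else 0) := by
  have key := sum_sub_removeLoop_eq_sum_transferWt hmem hdinj
    (fun _ s' => if s' = s then (1 : ℤ) else 0)
  rw [Finset.sum_sub_distrib, ← natCast_occ, ← natCast_occ,
    sum_transferWt_const hpen ht0] at key
  linarith

lemma occ_removeLoop [Fintype D] [DecidableEq D] [DecidableEq S] {A : D → S}
    {L : Loop S D} (hmem : ∀ t d, L.dem t = some d → A d = L.vtx t)
    (hdinj : ∀ t t' d, L.dem t = some d → L.dem t' = some d → t = t')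
    {t0 : Fin L.m} (hpen : ∀ t, L.dem t = none → t = t0) (ht0 : L.dem t0 = none)
    (hne : L.vtx (cnext t0) ≠ L.vtx t0) :
    occ (removeLoop A L) (L.vtx (cnext t0)) + 1 = occ A (L.vtx (cnext t0)) ∧
    occ (removeLoop A L) (L.vtx t0) = occ A (L.vtx t0) + 1 ∧
    ∀ s, s ≠ L.vtx (cnext t0) → s ≠ L.vtx t0 → occ (removeLoop A L) s = occ A s := by
  have hocc := natCast_occ_removeLoop hmem hdinj hpen ht0
  refine ⟨?_, ?_, fun s hsi hsj => ?_⟩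
  · have h := hocc (L.vtx (cnext t0))
    rw [if_neg hne.symm, if_pos rfl] at h
    omega
  · have h := hocc (L.vtx t0)
    rw [if_pos rfl, if_neg hne] at h
    omega
  · have h := hocc s
    rw [if_neg (Ne.symm hsj), if_neg (Ne.symm hsi)] at h
    omega

lemma loopCost_eq_wpen_add_sum_transferWt [Fintype D] [DecidableEq S] (CM : D → S → ℤ)
    (p : S → ℕ → ℤ) (A : D → S) {L : Loop S D} {t0 : Fin L.m}
    (hpen : ∀ t, L.dem t = none → t = t0) (ht0 : L.dem t0 = none) :
    loopCost CM p A L = wpen p A (L.vtx t0) (L.vtx (cnext t0)) + ∑ t, transferWt CM L t := by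
  have hterm : ∀ t, edgeWt CM p A L t = transferWt CM L t +
      if t0 = t then wpen p A (L.vtx t0) (L.vtx (cnext t0)) else 0 := by
    intro t
    rcases ht : L.dem t with _ | d
    · obtain rfl := hpen t ht
      simp [edgeWt, transferWt, ht]
    · have hne : t0 ≠ t := by rintro rfl; simp [ht0] at ht
      simp [edgeWt, transferWt, ht, hne]
  simp only [loopCost, hterm, Finset.sum_add_distrib, Finset.sum_ite_eq, Finset.mem_univ,
    if_true, add_comm]

lemma cost_removeLoop [Fintype D] [DecidableEq D] [Fintype S] [DecidableEq S]
    (CM : D → S → ℤ) (p : S → ℕ → ℤ) {A : D → S} {L : Loop S D}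
    (hmem : ∀ t d, L.dem t = some d → A d = L.vtx t)
    (hdinj : ∀ t t' d, L.dem t = some d → L.dem t' = some d → t = t')
    {t0 : Fin L.m} (hpen : ∀ t, L.dem t = none → t = t0) (ht0 : L.dem t0 = none)
    (hne : L.vtx (cnext t0) ≠ L.vtx t0) :
    cost CM p (removeLoop A L) = cost CM p A + loopCost CM p A L := by
  obtain ⟨hsi, hsj, hother⟩ := occ_removeLoop hmem hdinj hpen ht0 hne
  have htransfer := sum_sub_removeLoop_eq_sum_transferWt hmem hdinj CM
  rw [Finset.sum_sub_distrib] at htransfer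
  rw [cost, cost, sum_penalty_of_move p hne hsi hsj hother,
    loopCost_eq_wpen_add_sum_transferWt CM p A hpen ht0, wpen]
  linarith

end RemoveLoop

theorem remove_path_loop_from_allotment_general
    (D S : Type) [Fintype D] [DecidableEq D] [Fintype S] [DecidableEq S]
    (CM : D → S → ℤ) (p : S → ℕ → ℤ)
    (A : D → S) (L : Loop S D) (hL : IsLoop A L)
    (t0 : Fin L.m) (ht0 : L.dem t0 = none) :
    ((occ (removeLoop A L) (L.vtx (cnext t0)) : ℤ) = (occ A (L.vtx (cnext t0)) : ℤ) - 1) ∧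
    occ (removeLoop A L) (L.vtx t0) = occ A (L.vtx t0) + 1 ∧
    (∀ s, s ≠ L.vtx (cnext t0) → s ≠ L.vtx t0 → occ (removeLoop A L) s = occ A s) ∧
    cost CM p (removeLoop A L) = cost CM p A + loopCost CM p A L ∧
    (loopCost CM p A L < 0 → ¬ (∀ B : D → S, cost CM p A ≤ cost CM p B)) := by
  obtain ⟨hm, hvinj, hmem, hdinj, hninj⟩ := hL
  have hpen : ∀ t, L.dem t = none → t = t0 := fun t ht => hninj t t0 ht ht0
  have hne : L.vtx (cnext t0) ≠ L.vtx t0 := hvinj.ne (cnext_ne_self hm t0)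
  obtain ⟨hsi, hsj, hother⟩ := occ_removeLoop hmem hdinj hpen ht0 hne
  have hcost := cost_removeLoop CM p hmem hdinj hpen ht0 hne
  refine ⟨by omega, hsj, hother, hcost, fun hneg hopt => ?_⟩
  linarith [hopt (removeLoop A L)]

/-- removing a type (ii) loop (a directed path of transfer edges from
`s_i` to `s_j` closed by the penalty transfer edge from `s_j` to `s_i`; here the
penalty edge is edge `t0`, so `s_j = L.vtx t0` and `s_i = L.vtx (cnext t0)`)
decreases the occupancy of `s_i` by one, increases the occupancy of `s_j` by one,
preserves all other occupancies, and changes the cost by the cost of the loop; in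
particular if the loop has negative cost then `A` is not optimal. -/
theorem remove_path_loop_from_allotment
    (D S : Type) [Fintype D] [DecidableEq D] [Fintype S] [DecidableEq S]
    (CM : D → S → ℤ) (c : S → ℕ) (p : S → ℕ → ℤ)
    (hp0 : ∀ s j, j ≤ c s → p s j = 0)
    (hppos : ∀ s j, c s < j → 0 < p s j)
    (hpmono : ∀ s j, c s < j → p s j ≤ p s (j + 1))
    (A : D → S) (L : Loop S D) (hL : IsLoop A L)
    (t0 : Fin L.m) (ht0 : L.dem t0 = none) :
    ((occ (removeLoop A L) (L.vtx (cnext t0)) : ℤ) = (occ A (L.vtx (cnext t0)) : ℤ) - 1) ∧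
    occ (removeLoop A L) (L.vtx t0) = occ A (L.vtx t0) + 1 ∧
    (∀ s, s ≠ L.vtx (cnext t0) → s ≠ L.vtx t0 → occ (removeLoop A L) s = occ A s) ∧
    cost CM p (removeLoop A L) = cost CM p A + loopCost CM p A L ∧
    (loopCost CM p A L < 0 → ¬ (∀ B : D → S, cost CM p A ≤ cost CM p B)) :=
  remove_path_loop_from_allotment_general D S CM p A L hL t0 ht0
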